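/- Upper bound on von Neumann entropy by log-determinant: Let n be a positive integer and ν_1, …, ν_n real numbers with ν_j ≥ 1 for all j, not all equal to 1, and set m = 2·Σ_{j=1}^n log ν_j. Then Σ_{j=1}^n h(ν_j) ≤ f_n(m). -/

import Mathlib

/-
Writing `ν = eᵗ`, the function `t ↦ h(eᵗ)` is concave on `[0, ∞)`: its second derivative is
`(eᵗ/2)·(log((ν+1)/(ν-1)) - 2ν/(ν²-1))`, and `log u ≤ sinh (log u)` with
`u = (ν+1)/(ν-1)` is exactly `log((ν+1)/(ν-1)) ≤ 2ν/(ν²-1)`. Jensen's inequality at the points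
`log ν_j` gives `∑ h(ν_j) ≤ n·h(e^{m/(2n)})`, and the right-hand side is `f_n(m)`: with
`ν = e^{m/(2n)}` one has `e^{m/n} - 1 = ν² - 1` and `coth(m/(4n)) = (ν+1)/(ν-1)`.
-/

/-- The von Neumann entropy contribution of a single symplectic eigenvalue
`ν ≥ 1`: `h(ν) = ((ν+1)/2)·log((ν+1)/2) − ((ν−1)/2)·log((ν−1)/2)` (with
`h(1) = 0`). -/
noncomputable def hEnt (ν : ℝ) : ℝ :=
  ((ν + 1) / 2) * Real.log ((ν + 1) / 2) - ((ν - 1) / 2) * Real.log ((ν - 1) / 2)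

/-- The function `f_n(m)`: tight bound relating von Neumann entropy and
log-determinant of Gaussian states, with `coth t = cosh t / sinh t`. -/
noncomputable def f (n : ℕ) (m : ℝ) : ℝ :=
  ((n : ℝ) / 2) * (Real.log ((Real.exp (m / (n : ℝ)) - 1) / 4)
    + Real.exp (m / (2 * (n : ℝ))) *
        Real.log (Real.cosh (m / (4 * (n : ℝ))) / Real.sinh (m / (4 * (n : ℝ)))))

open Real Set

lemma continuous_hEnt : Continuous hEnt :=
  (continuous_id.add continuous_const |>.div_const 2).mul_log.sub
    (continuous_id.sub continuous_const |>.div_const 2).mul_log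

lemma hasDerivAt_hEnt {ν : ℝ} (hν : 1 < ν) :
    HasDerivAt hEnt (log ((ν + 1) / (ν - 1)) / 2) ν := by
  have hplus := (hasDerivAt_mul_log (show (ν + 1) / 2 ≠ 0 by positivity)).comp ν
    (((hasDerivAt_id ν).add_const 1).div_const 2)
  have hminus := (hasDerivAt_mul_log (show (ν - 1) / 2 ≠ 0 by linarith)).comp ν
    (((hasDerivAt_id ν).sub_const 1).div_const 2)
  refine (hplus.sub hminus).congr_deriv ?_
  rw [log_div (y := ν - 1) (by linarith) (by linarith), log_div (by linarith) two_ne_zero,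
    log_div (by linarith) two_ne_zero]
  ring

lemma hasDerivAt_mul_log_add_one_div_sub_one {ν : ℝ} (hν : 1 < ν) :
    HasDerivAt (fun x ↦ x * log ((x + 1) / (x - 1)))
      (log ((ν + 1) / (ν - 1)) - 2 * ν / (ν ^ 2 - 1)) ν := by
  have h₁ : ν - 1 ≠ 0 := by linarith
  have h₂ : ν + 1 ≠ 0 := by linarith
  have h₃ : ν ^ 2 - 1 ≠ 0 := by nlinarith
  have hquot := ((hasDerivAt_id ν).add_const 1).div ((hasDerivAt_id ν).sub_const 1) h₁
  refine ((hasDerivAt_id ν).mul (hquot.log (div_ne_zero h₂ h₁))).congr_deriv ?_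
  simp only [Pi.div_apply, id]
  field_simp
  ring

lemma log_add_one_div_sub_one_le {ν : ℝ} (hν : 1 < ν) :
    log ((ν + 1) / (ν - 1)) ≤ 2 * ν / (ν ^ 2 - 1) := by
  have h₁ : ν - 1 ≠ 0 := by linarith
  have h₂ : ν ^ 2 - 1 ≠ 0 := by nlinarith
  have hu : 1 ≤ (ν + 1) / (ν - 1) := by rw [one_le_div (by linarith)]; linarith
  calc log ((ν + 1) / (ν - 1)) ≤ sinh (log ((ν + 1) / (ν - 1))) :=
        self_le_sinh_iff.mpr (log_nonneg hu)
    _ = 2 * ν / (ν ^ 2 - 1) := by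
      rw [sinh_log (by linarith)]
      field_simp
      ring

lemma concaveOn_hEnt_comp_exp : ConcaveOn ℝ (Ici 0) (hEnt ∘ exp) := by
  have one_lt_exp {t : ℝ} (ht : t ∈ interior (Ici 0)) : 1 < exp t := by
    rw [interior_Ici] at ht
    exact one_lt_exp_iff.mpr ht
  refine concaveOn_of_hasDerivWithinAt2_nonpos (convex_Ici 0)
    (continuous_hEnt.comp continuous_exp).continuousOn
    (f' := fun t ↦ exp t * log ((exp t + 1) / (exp t - 1)) / 2)
    (f'' := fun t ↦ (log ((exp t + 1) / (exp t - 1)) - 2 * exp t / (exp t ^ 2 - 1)) * exp t / 2)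
    (fun t ht ↦ ?_) (fun t ht ↦ ?_) (fun t ht ↦ ?_)
  · exact (((hasDerivAt_hEnt (one_lt_exp ht)).comp t (hasDerivAt_exp t)).congr_deriv
      (by ring)).hasDerivWithinAt
  · exact (((hasDerivAt_mul_log_add_one_div_sub_one (one_lt_exp ht)).comp t
      (hasDerivAt_exp t)).div_const 2).hasDerivWithinAt
  · have hlog := log_add_one_div_sub_one_le (one_lt_exp ht)
    have := exp_pos t
    nlinarith

lemma sum_hEnt_le_card_mul {ι : Type*} [Fintype ι] [Nonempty ι] (ν : ι → ℝ)
    (hν : ∀ i, 1 ≤ ν i) :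
    ∑ i, hEnt (ν i) ≤ Fintype.card ι * hEnt (exp ((∑ i, log (ν i)) / Fintype.card ι)) := by
  have hcard : (Fintype.card ι : ℝ) ≠ 0 := Nat.cast_ne_zero.mpr Fintype.card_ne_zero
  have jensen := concaveOn_hEnt_comp_exp.le_map_sum (t := Finset.univ)
    (w := fun _ ↦ (Fintype.card ι : ℝ)⁻¹) (p := fun i ↦ log (ν i))
    (fun _ _ ↦ by positivity) (by simp [hcard]) (fun i _ ↦ log_nonneg (hν i))
  simp only [Function.comp_apply, smul_eq_mul, exp_log (zero_lt_one.trans_le (hν _)),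
    inv_mul_eq_div, ← Finset.sum_div] at jensen
  calc ∑ i, hEnt (ν i) = Fintype.card ι * ((∑ i, hEnt (ν i)) / Fintype.card ι) := by
        field_simp
    _ ≤ _ := by gcongr

lemma cosh_half_div_sinh_half (x : ℝ) :
    cosh (x / 2) / sinh (x / 2) = (exp x + 1) / (exp x - 1) := by
  have hx : exp x = exp (x / 2) * exp (x / 2) := by rw [← exp_add, add_halves]
  have hcosh : 2 * exp (x / 2) * cosh (x / 2) = exp x + 1 := by
    rw [cosh_eq, exp_neg, hx]; field_simp
  have hsinh : 2 * exp (x / 2) * sinh (x / 2) = exp x - 1 := by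
    rw [sinh_eq, exp_neg, hx]; field_simp
  rw [← hcosh, ← hsinh, mul_div_mul_left _ _ (by positivity)]

lemma f_eq_mul_hEnt {n : ℕ} (hn : n ≠ 0) {m : ℝ} (hm : 0 < m) :
    f n m = n * hEnt (exp (m / (2 * n))) := by
  rw [f]
  set ν := exp (m / (2 * n))
  have hν : 1 < ν := one_lt_exp_iff.mpr (by positivity)
  have hsq : exp (m / n) = ν ^ 2 := by rw [sq, ← exp_add]; congr 1; field_simp; ring
  have hcoth : cosh (m / (4 * n)) / sinh (m / (4 * n)) = (ν + 1) / (ν - 1) := by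
    rw [← cosh_half_div_sinh_half]; congr 2 <;> field_simp <;> ring
  have hlog_prod : log ((ν ^ 2 - 1) / 4) = log ((ν + 1) / 2) + log ((ν - 1) / 2) := by
    rw [← log_mul (by positivity) (by linarith)]; ring_nf
  have hlog_quot : log ((ν + 1) / (ν - 1)) = log ((ν + 1) / 2) - log ((ν - 1) / 2) := by
    rw [← log_div (by positivity) (by linarith), div_div_div_cancel_right₀ two_ne_zero]
  rw [hsq, hcoth, hlog_prod, hlog_quot, hEnt]
  ring

/-- **Upper bound on the von Neumann entropy by the log-determinant.** For
symplectic eigenvalues `ν_j ≥ 1`, not all equal to `1`, with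
`m = 2 ∑ j, log ν_j`, one has `∑ j, h(ν_j) ≤ f_n(m)`. -/
theorem vonNeumann_entropy_le_f_n (n : ℕ) (hn : 0 < n) (ν : Fin n → ℝ)
    (hν : ∀ j, 1 ≤ ν j) (hne : ∃ j, ν j ≠ 1) :
    ∑ j, hEnt (ν j) ≤ f n (2 * ∑ j, Real.log (ν j)) := by
  have : Nonempty (Fin n) := Fin.pos_iff_nonempty.mp hn
  have hpos : 0 < ∑ j, log (ν j) := by
    obtain ⟨j, hj⟩ := hne
    exact Finset.sum_pos' (fun i _ ↦ log_nonneg (hν i))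
      ⟨j, Finset.mem_univ j, log_pos ((hν j).lt_of_ne' hj)⟩
  rw [f_eq_mul_hEnt hn.ne' (by positivity), mul_div_mul_left _ _ two_ne_zero]
  simpa using sum_hEnt_le_card_mul ν hν
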